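/- Let C be a semisimple k-linear pivotal monoidal category. Then the Frobenius–Schur indicators are additive: ν_n(V ⊕ W) = ν_n(V) + ν_n(W) for all objects V, W of C and every n ≥ 1. -/

import Mathlib

open CategoryTheory MonoidalCategory Functor.LaxMonoidal Functor.OplaxMonoidal

namespace FSI

variable {C : Type*} [Category C] [MonoidalCategory C] [RightRigidCategory C]

/-- The adjunction isomorphism `A : C(I, V ⊗ W) → C(V^∨, W)`,
`A(f) = (ev_V ⊗ W) ∘ Φ⁻¹ ∘ (V^∨ ⊗ f)`. -/
def Amap (V W : C) (f : 𝟙_ C ⟶ V ⊗ W) : Vᘁ ⟶ W :=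
  (ρ_ (Vᘁ)).inv ≫ (Vᘁ ◁ f) ≫ (α_ (Vᘁ) V W).inv ≫ (ε_ V (Vᘁ) ▷ W) ≫ (λ_ W).hom

/-- The inverse of the adjunction isomorphism `A`, `A⁻¹(g) = (V ⊗ g) ∘ db_V`. -/
def Ainv (V W : C) (g : Vᘁ ⟶ W) : 𝟙_ C ⟶ V ⊗ W :=
  η_ V (Vᘁ) ≫ (V ◁ g)

/-- `B : C(V, W) → C(I, W ⊗ V^∨)`, `B(f) = (f ⊗ V^∨) ∘ db_V`. -/
def Bmap (V W : C) (f : V ⟶ W) : 𝟙_ C ⟶ W ⊗ (Vᘁ) :=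
  η_ V (Vᘁ) ≫ (f ▷ (Vᘁ))

/-- `T_{V,W} : C(V^∨, W) → C(W^∨, V)`, `T(g) = j_V⁻¹ ∘ g^∨`, defined relative to a chosen
isomorphism `j_V : V ≅ V^∨∨` (a component of a pivotal structure). -/
def Tmap {V W : C} (jV : V ≅ (Vᘁ)ᘁ) (g : Vᘁ ⟶ W) : Wᘁ ⟶ V :=
  gᘁ ≫ jV.inv

/-- `E_{V,W} = A⁻¹ ∘ T_{V,W} ∘ A : C(I, V ⊗ W) → C(I, W ⊗ V)`. -/
def Emap {V : C} (W : C) (jV : V ≅ (Vᘁ)ᘁ) (f : 𝟙_ C ⟶ V ⊗ W) : 𝟙_ C ⟶ W ⊗ V :=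
  Ainv W V (Tmap jV (Amap V W f))

/-- The `n`-fold tensor power with rightmost parenthesization:
`V^⊗0 = I`, `V^⊗(n+1) = V ⊗ V^⊗n`. -/
def pow (V : C) : ℕ → C
  | 0 => 𝟙_ C
  | n + 1 => V ⊗ pow V n

/-- The coherence isomorphism `Φ^(n+1) : V^⊗n ⊗ V ⟶ V^⊗(n+1)` built from associators
(and unitors). -/
def PhiN (V : C) : ∀ n : ℕ, pow V n ⊗ V ⟶ pow V (n + 1)
  | 0 => (λ_ V).hom ≫ (ρ_ V).inv
  | n + 1 => (α_ V (pow V n) V).hom ≫ (V ◁ PhiN V n)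

/-- `E_V^(n+1) = C(I, Φ^(n+1)) ∘ E_{V, V^⊗n} : C(I, V^⊗(n+1)) → C(I, V^⊗(n+1))`.
Here `jj` is the family of components of a pivotal structure. -/
def EN (jj : ∀ X : C, X ≅ (Xᘁ)ᘁ) (V : C) (n : ℕ)
    (f : 𝟙_ C ⟶ pow V (n + 1)) : 𝟙_ C ⟶ pow V (n + 1) :=
  Emap (pow V n) (jj V) f ≫ PhiN V n

/-- The canonical evaluation exhibiting `Y^∨ ⊗ X^∨` as a dual of `X ⊗ Y`. -/
def tildeEv (X Y : C) : ((Yᘁ) ⊗ (Xᘁ)) ⊗ (X ⊗ Y) ⟶ 𝟙_ C :=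
  (α_ (Yᘁ) (Xᘁ) (X ⊗ Y)).hom ≫
    ((Yᘁ) ◁ ((α_ (Xᘁ) X Y).inv ≫ (ε_ X (Xᘁ) ▷ Y) ≫ (λ_ Y).hom)) ≫ ε_ Y (Yᘁ)

/-- The canonical isomorphism `ζ : Y^∨ ⊗ X^∨ ⟶ (X ⊗ Y)^∨` making the duality functor
monoidal; it is the unique morphism with `ev_{X⊗Y} ∘ (ζ ⊗ (X⊗Y)) = tildeEv`. -/
def zeta (X Y : C) : (Yᘁ) ⊗ (Xᘁ) ⟶ (X ⊗ Y)ᘁ :=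
  (ρ_ ((Yᘁ) ⊗ (Xᘁ))).inv ≫ (((Yᘁ) ⊗ (Xᘁ)) ◁ η_ (X ⊗ Y) ((X ⊗ Y)ᘁ)) ≫
    (α_ ((Yᘁ) ⊗ (Xᘁ)) (X ⊗ Y) ((X ⊗ Y)ᘁ)).inv ≫
      (tildeEv X Y ▷ ((X ⊗ Y)ᘁ)) ≫ (λ_ ((X ⊗ Y)ᘁ)).hom

/-- A pivotal structure on a rigid monoidal category: a monoidal natural isomorphism
`j : Id → (−)^∨∨`. -/
structure Pivotal (C : Type*) [Category C] [MonoidalCategory C] [RightRigidCategory C] where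
  j : ∀ X : C, X ≅ (Xᘁ)ᘁ
  naturality : ∀ {X Y : C} (f : X ⟶ Y), f ≫ (j Y).hom = (j X).hom ≫ (fᘁ)ᘁ
  monoidality : ∀ X Y : C,
    ((j X).hom ⊗ₘ (j Y).hom) ≫ zeta (Yᘁ) (Xᘁ) = (j (X ⊗ Y)).hom ≫ (zeta X Y)ᘁ

/-- The categorical trace `ctr(a) = ev_{V^∨} ∘ (a ⊗ V^∨) ∘ db_V ∈ End(I)` of a morphism
`a : V ⟶ V^∨∨`. -/
def ctr {V : C} (a : V ⟶ (Vᘁ)ᘁ) : 𝟙_ C ⟶ 𝟙_ C :=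
  η_ V (Vᘁ) ≫ (a ▷ (Vᘁ)) ≫ ε_ (Vᘁ) ((Vᘁ)ᘁ)

/-- The left pivotal trace `ptr_l(f) = ev_V ∘ (V^∨ ⊗ (f ∘ j_V⁻¹)) ∘ db_{V^∨}`. -/
def ptrl (jj : ∀ X : C, X ≅ (Xᘁ)ᘁ) {V : C} (f : V ⟶ V) : 𝟙_ C ⟶ 𝟙_ C :=
  η_ (Vᘁ) ((Vᘁ)ᘁ) ≫ ((Vᘁ) ◁ ((jj V).inv ≫ f)) ≫ ε_ V (Vᘁ)

/-- The right pivotal trace `ptr_r(f) = ev_{V^∨} ∘ ((j_V ∘ f) ⊗ V^∨) ∘ db_V`. -/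
def ptrr (jj : ∀ X : C, X ≅ (Xᘁ)ᘁ) {V : C} (f : V ⟶ V) : 𝟙_ C ⟶ 𝟙_ C :=
  η_ V (Vᘁ) ≫ ((f ≫ (jj V).hom) ▷ (Vᘁ)) ≫ ε_ (Vᘁ) ((Vᘁ)ᘁ)

/-- A pivotal category is *spherical* if left and right pivotal traces agree. -/
def Spherical (jj : ∀ X : C, X ≅ (Xᘁ)ᘁ) : Prop :=
  ∀ (V : C) (f : V ⟶ V), ptrl jj f = ptrr jj f

section LinearDefs

variable (k : Type*) [Field k] [Preadditive C] [CategoryTheory.Linear k C]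
  [MonoidalPreadditive C] [MonoidalLinear k C]

set_option maxHeartbeats 2000000 in
/-- `E_V^(n+1)` as a linear endomorphism of the Hom space `C(I, V^⊗(n+1))`. -/
def ENlin (jj : ∀ X : C, X ≅ (Xᘁ)ᘁ) (V : C) (n : ℕ) :
    Module.End k (𝟙_ C ⟶ pow V (n + 1)) where
  toFun := EN jj V n
  map_add' f g := by
    have key : ∀ (W : C) (a b : 𝟙_ C ⟶ V ⊗ W),
        Emap W (jj V) (a + b) = Emap W (jj V) a + Emap W (jj V) b := by
      intro W a b
      simp [Emap, Ainv, Tmap, Amap, rightAdjointMate,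
        MonoidalPreadditive.whiskerLeft_add, MonoidalPreadditive.add_whiskerRight,
        Preadditive.comp_add, Preadditive.add_comp]
    exact (congrArg (· ≫ PhiN V n) (key (pow V n) f g)).trans (Preadditive.add_comp _ _ _ _ _ _)
  map_smul' c f := by
    have key : ∀ (W : C) (a : 𝟙_ C ⟶ V ⊗ W),
        Emap W (jj V) (c • a) = c • Emap W (jj V) a := by
      intro W a
      simp [Emap, Ainv, Tmap, Amap, rightAdjointMate,
        MonoidalLinear.whiskerLeft_smul, MonoidalLinear.smul_whiskerRight,
        CategoryTheory.Linear.comp_smul, CategoryTheory.Linear.smul_comp]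
    exact (congrArg (· ≫ PhiN V n) (key (pow V n) f)).trans
      (CategoryTheory.Linear.smul_comp _ _ _ _ _ _)

/-- The `(n, r)`-th Frobenius–Schur indicator `ν_{n,r}(V) = Tr((E_V^(n))^r)` of an object `V`
of a `k`-linear pivotal monoidal category (with pivotal structure components `jj`). -/
noncomputable def nu (jj : ∀ X : C, X ≅ (Xᘁ)ᘁ) (V : C) (n r : ℕ) : k :=
  LinearMap.trace k _ ((ENlin k jj V (n - 1)) ^ r)

end LinearDefs

section SemisimpleDefs

variable (k : Type*) [Field k]

/-- An object of a `k`-linear category is *simple* if its endomorphism ring is `k`. -/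
def IsSimpleObj {C : Type*} [Category C] [Preadditive C] [CategoryTheory.Linear k C]
    (X : C) : Prop :=
  𝟙 X ≠ 0 ∧ ∀ f : X ⟶ X, ∃ c : k, f = c • 𝟙 X

/-- A `k`-linear monoidal category is *semisimple* if every object is a finite direct sum
of simple objects. -/
def SemisimpleCat (C : Type*) [Category C] [Preadditive C] [CategoryTheory.Linear k C] : Prop :=
  ∀ X : C, ∃ (n : ℕ) (s : Fin n → C) (a : ∀ i, s i ⟶ X) (b : ∀ i, X ⟶ s i),
    (∀ i, IsSimpleObj k (s i)) ∧ (∀ i, a i ≫ b i = 𝟙 (s i)) ∧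
      (∀ i j, i ≠ j → a i ≫ b j = 0) ∧ (∑ i, b i ≫ a i) = 𝟙 X

/-- An object is *trivial* if it is (isomorphic to) a finite direct sum of copies of the
unit object. -/
def IsTrivial {C : Type*} [Category C] [MonoidalCategory C] [Preadditive C] (T : C) : Prop :=
  ∃ (n : ℕ) (a : Fin n → (𝟙_ C ⟶ T)) (b : Fin n → (T ⟶ 𝟙_ C)),
    (∀ i j, a i ≫ b j = if i = j then 𝟙 (𝟙_ C) else 0) ∧ (∑ i, b i ≫ a i) = 𝟙 T

/-- A trivial (`I`-isotypical) component of an object `V`: a retract `(T, ι, π)` of `V`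
with `T` trivial such that `ι ∘ π` is the idempotent of `V` projecting onto the
`I`-isotypical summand. -/
structure TrivialComponent {C : Type*} [Category C] [MonoidalCategory C] [Preadditive C]
    (V : C) where
  T : C
  ι : T ⟶ V
  π : V ⟶ T
  trivial : IsTrivial T
  retract : ι ≫ π = 𝟙 T
  fac_from : ∀ g : 𝟙_ C ⟶ V, g ≫ π ≫ ι = g
  fac_to : ∀ p : V ⟶ 𝟙_ C, π ≫ ι ≫ p = p

/-- The canonical exchange isomorphisms `τ_{V,T} : V ⊗ T ⟶ T ⊗ V` for `T` trivial:
the unique family natural in `V` and in trivial `T` with `τ_{V,I}` the canonical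
isomorphism. -/
structure TrivialExchange (C : Type*) [Category C] [MonoidalCategory C] [Preadditive C] where
  τ : ∀ V T : C, V ⊗ T ⟶ T ⊗ V
  iso : ∀ V T : C, IsTrivial T → IsIso (τ V T)
  natV : ∀ {V V' : C} (f : V ⟶ V') (T : C), IsTrivial T →
    (f ▷ T) ≫ τ V' T = τ V T ≫ (T ◁ f)
  natT : ∀ (V : C) {T T' : C} (g : T ⟶ T'), IsTrivial T → IsTrivial T' →
    (V ◁ g) ≫ τ V T' = τ V T ≫ (g ▷ V)
  unit : ∀ V : C, τ V (𝟙_ C) = (ρ_ V).hom ≫ (λ_ V).inv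

end SemisimpleDefs

/-!
Let `e = i ∘ p` be the idempotent of `Z` projecting onto the summand `V` and `E = E_Z^(n+1)`.
As `e_V + e_W = 1`, `Tr E = Tr (E ∘ (e_V ⊗ 1)) + Tr (E ∘ (e_W ⊗ 1))`. Now `E` rotates the tensor
factors: precomposing with `g` on factor `j + 1` is postcomposing with `g` on factor `j`. With
`Tr (E P) = Tr (P E P)` for idempotent `P`, this moves `e` into one factor after the other, so
`Tr (E ∘ (e ⊗ 1 ⊗ ⋯ ⊗ 1)) = Tr (E ∘ e^⊗(n+1)) = Tr (E ∘ i^⊗(n+1) ∘ p^⊗(n+1))`. By cyclicity of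
the trace this is `Tr (p^⊗(n+1) ∘ E_Z ∘ i^⊗(n+1))`, which is `Tr E_V` because `E` is natural
with respect to `i` (this is where naturality of the pivotal structure enters).
-/

lemma Amap_eq (V W : C) (f : 𝟙_ C ⟶ V ⊗ W) :
    Amap V W f = (ρ_ (Vᘁ)).inv ≫ (tensorLeftHomEquiv (𝟙_ C) V (Vᘁ) W).symm f := rfl

lemma Ainv_eq (V W : C) (g : Vᘁ ⟶ W) :
    Ainv V W g = tensorLeftHomEquiv (𝟙_ C) V (Vᘁ) W ((ρ_ (Vᘁ)).hom ≫ g) := by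
  simp [Ainv, tensorLeftHomEquiv, ← unitors_equal]

lemma Ainv_Amap (V W : C) (f : 𝟙_ C ⟶ V ⊗ W) : Ainv V W (Amap V W f) = f := by
  rw [Ainv_eq, Amap_eq, Iso.hom_inv_id_assoc, Equiv.apply_symm_apply]

lemma Amap_Ainv (V W : C) (g : Vᘁ ⟶ W) : Amap V W (Ainv V W g) = g := by
  rw [Ainv_eq, Amap_eq, Equiv.symm_apply_apply, Iso.inv_hom_id_assoc]

lemma Ainv_comp {X Y U U' : C} (g : X ⟶ Y) (t : Xᘁ ⟶ U) (a : U ⟶ U') :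
    Ainv Y U' (gᘁ ≫ t ≫ a) = Ainv X U t ≫ (g ⊗ₘ a) := by
  dsimp [Ainv]
  rw [MonoidalCategory.whiskerLeft_comp, MonoidalCategory.whiskerLeft_comp,
    coevaluation_comp_rightAdjointMate_assoc, MonoidalCategory.tensorHom_def]
  slice_lhs 2 3 => rw [← whisker_exchange]
  simp

lemma Tmap_comp {V Z X Y : C} (a : V ⟶ Z) (g : X ⟶ Y) {jV : V ≅ (Vᘁ)ᘁ} {jZ : Z ≅ (Zᘁ)ᘁ}
    (hnat : a ≫ jZ.hom = jV.hom ≫ (aᘁ)ᘁ) (t : Vᘁ ⟶ X) :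
    Tmap jZ (aᘁ ≫ t ≫ g) = gᘁ ≫ Tmap jV t ≫ a := by
  have hinv : ((aᘁ)ᘁ) ≫ jZ.inv = jV.inv ≫ a := by
    rw [Iso.comp_inv_eq, Category.assoc, hnat, Iso.inv_hom_id_assoc]
  simp [Tmap, comp_rightAdjointMate, hinv]

lemma Emap_comp_tensorHom {V Z X Y : C} (a : V ⟶ Z) (g : X ⟶ Y) {jV : V ≅ (Vᘁ)ᘁ}
    {jZ : Z ≅ (Zᘁ)ᘁ} (hnat : a ≫ jZ.hom = jV.hom ≫ (aᘁ)ᘁ) (f : 𝟙_ C ⟶ V ⊗ X) :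
    Emap Y jZ (f ≫ (a ⊗ₘ g)) = Emap X jV f ≫ (g ⊗ₘ a) := by
  have hA : Amap Z Y (f ≫ (a ⊗ₘ g)) = aᘁ ≫ Amap V X f ≫ g := by
    apply Function.LeftInverse.injective (Amap_Ainv Z Y)
    rw [Ainv_Amap, Ainv_comp, Ainv_Amap]
  rw [Emap, hA, Tmap_comp a g hnat, Ainv_comp, Emap]

section TensorPowers

omit [RightRigidCategory C]

def powMap {V Z : C} (a : V ⟶ Z) : ∀ m : ℕ, pow V m ⟶ pow Z m
  | 0 => 𝟙 _
  | m + 1 => a ⊗ₘ powMap a m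

@[simp] lemma powMap_id (V : C) : ∀ m : ℕ, powMap (𝟙 V) m = 𝟙 (pow V m)
  | 0 => rfl
  | m + 1 => by
      show 𝟙 V ⊗ₘ powMap (𝟙 V) m = 𝟙 (V ⊗ pow V m)
      rw [powMap_id V m, id_tensorHom_id]

lemma powMap_comp {V Z U : C} (a : V ⟶ Z) (b : Z ⟶ U) :
    ∀ m : ℕ, powMap (a ≫ b) m = powMap a m ≫ powMap b m
  | 0 => (Category.comp_id _).symm
  | m + 1 => by
      show (a ≫ b) ⊗ₘ powMap (a ≫ b) m = (a ⊗ₘ powMap a m) ≫ (b ⊗ₘ powMap b m)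
      rw [powMap_comp a b m, tensorHom_comp_tensorHom]

lemma PhiN_naturality {V Z : C} (a : V ⟶ Z) : ∀ m : ℕ,
    (powMap a m ⊗ₘ a) ≫ PhiN Z m = PhiN V m ≫ powMap a (m + 1)
  | 0 => by
      show (𝟙 (𝟙_ C) ⊗ₘ a) ≫ (λ_ Z).hom ≫ (ρ_ Z).inv
        = ((λ_ V).hom ≫ (ρ_ V).inv) ≫ (a ⊗ₘ 𝟙 (𝟙_ C))
      simp
  | m + 1 => by
      show ((a ⊗ₘ powMap a m) ⊗ₘ a) ≫ (α_ Z (pow Z m) Z).hom ≫ (Z ◁ PhiN Z m)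
        = ((α_ V (pow V m) V).hom ≫ (V ◁ PhiN V m)) ≫ (a ⊗ₘ powMap a (m + 1))
      rw [associator_naturality_assoc, Category.assoc, ← id_tensorHom, ← id_tensorHom,
        tensorHom_comp_tensorHom, tensorHom_comp_tensorHom, PhiN_naturality a m]
      simp

/-- `e` acting on the first `j` tensor factors of `Z^⊗m` (on all of them once `j ≥ m`). -/
def prefixPow {Z : C} (e : Z ⟶ Z) : ∀ m : ℕ, ℕ → (pow Z m ⟶ pow Z m)
  | _, 0 => 𝟙 _
  | 0, _ + 1 => 𝟙 _
  | m + 1, j + 1 => e ⊗ₘ prefixPow e m j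

@[simp] lemma prefixPow_zero {Z : C} (e : Z ⟶ Z) : ∀ m : ℕ, prefixPow e m 0 = 𝟙 (pow Z m)
  | 0 | _ + 1 => rfl

lemma prefixPow_one {Z : C} (e : Z ⟶ Z) (m : ℕ) : prefixPow e (m + 1) 1 = e ▷ pow Z m := by
  show e ⊗ₘ prefixPow e m 0 = e ▷ pow Z m
  rw [prefixPow_zero, tensorHom_id]

lemma prefixPow_self {Z : C} (e : Z ⟶ Z) : ∀ m : ℕ, prefixPow e m m = powMap e m
  | 0 => rfl
  | m + 1 => by
      show e ⊗ₘ prefixPow e m m = e ⊗ₘ powMap e m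
      rw [prefixPow_self e m]

lemma prefixPow_comp_of_le {Z : C} {e : Z ⟶ Z} (he : e ≫ e = e) : ∀ {m i j : ℕ}, i ≤ j →
    prefixPow e m i ≫ prefixPow e m j = prefixPow e m j
  | _, 0, _, _ => by simp
  | 0, _ + 1, _ + 1, _ => Category.comp_id _
  | m + 1, i + 1, j + 1, hij => by
      show (e ⊗ₘ prefixPow e m i) ≫ (e ⊗ₘ prefixPow e m j) = e ⊗ₘ prefixPow e m j
      rw [tensorHom_comp_tensorHom, he, prefixPow_comp_of_le he (Nat.le_of_succ_le_succ hij)]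

lemma prefixPow_comp_whiskerLeft {Z : C} {e : Z ⟶ Z} (he : e ≫ e = e) (m j : ℕ) :
    prefixPow e (m + 1) (j + 1) ≫ (Z ◁ prefixPow e m (j + 1)) =
      prefixPow e (m + 1) (j + 2) := by
  show (e ⊗ₘ prefixPow e m j) ≫ (Z ◁ prefixPow e m (j + 1)) = e ⊗ₘ prefixPow e m (j + 1)
  rw [← id_tensorHom, tensorHom_comp_tensorHom, Category.comp_id,
    prefixPow_comp_of_le he (Nat.le_succ j)]

lemma prefixPow_whiskerRight_PhiN {Z : C} (e : Z ⟶ Z) : ∀ {n j : ℕ}, j ≤ n →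
    (prefixPow e n j ▷ Z) ≫ PhiN Z n = PhiN Z n ≫ prefixPow e (n + 1) j
  | _, 0, _ => by simp
  | n + 1, j + 1, hjn => by
      show ((e ⊗ₘ prefixPow e n j) ▷ Z) ≫ (α_ Z (pow Z n) Z).hom ≫ (Z ◁ PhiN Z n)
        = ((α_ Z (pow Z n) Z).hom ≫ (Z ◁ PhiN Z n)) ≫ (e ⊗ₘ prefixPow e (n + 1) j)
      rw [← tensorHom_id, associator_naturality_assoc, ← id_tensorHom, tensorHom_comp_tensorHom,
        tensorHom_id, prefixPow_whiskerRight_PhiN e (Nat.le_of_succ_le_succ hjn), Category.assoc,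
        tensorHom_comp_tensorHom, Category.comp_id, Category.id_comp]

end TensorPowers

lemma EN_comp_whiskerLeft_prefixPow (jj : ∀ X : C, X ≅ (Xᘁ)ᘁ) {Z : C} (e : Z ⟶ Z) {n j : ℕ}
    (hjn : j ≤ n) (f : 𝟙_ C ⟶ pow Z (n + 1)) :
    EN jj Z n (f ≫ (Z ◁ prefixPow e n j)) = EN jj Z n f ≫ prefixPow e (n + 1) j := by
  have hnat : 𝟙 Z ≫ (jj Z).hom = (jj Z).hom ≫ ((𝟙 Z)ᘁ)ᘁ := by simp [rightAdjointMate_id]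
  rw [EN, EN, Category.assoc, ← prefixPow_whiskerRight_PhiN e hjn, ← tensorHom_id,
    ← Category.assoc, ← id_tensorHom]
  exact congrArg (· ≫ PhiN Z n) (Emap_comp_tensorHom (𝟙 Z) (prefixPow e n j) hnat f)

lemma EN_comp_powMap (jj : ∀ X : C, X ≅ (Xᘁ)ᘁ) {V Z : C} {a : V ⟶ Z} {b : Z ⟶ V}
    (hab : a ≫ b = 𝟙 V) (hnat : a ≫ (jj Z).hom = (jj V).hom ≫ (aᘁ)ᘁ) (n : ℕ)
    (f : 𝟙_ C ⟶ pow V (n + 1)) :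
    EN jj Z n (f ≫ powMap a (n + 1)) ≫ powMap b (n + 1) = EN jj V n f := by
  show (Emap (pow Z n) (jj Z) (f ≫ (a ⊗ₘ powMap a n)) ≫ PhiN Z n) ≫ powMap b (n + 1)
    = Emap (pow V n) (jj V) f ≫ PhiN V n
  erw [Emap_comp_tensorHom a (powMap a n) hnat, Category.assoc, Category.assoc,
    reassoc_of% (PhiN_naturality a n), ← powMap_comp, hab, powMap_id, Category.comp_id]

lemma trace_mul_eq_trace_mul_mul_of_isIdempotentElem {R M : Type*} [CommRing R]
    [AddCommGroup M] [Module R M] [Module.Free R M] [Module.Finite R M]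
    {L P Q : Module.End R M} (hP : IsIdempotentElem P) (hPL : P * L = L * Q) :
    LinearMap.trace R M (L * P) = LinearMap.trace R M (L * (Q * P)) :=
  calc LinearMap.trace R M (L * P)
      _ = LinearMap.trace R M ((L * P) * P) := by rw [mul_assoc, hP.eq]
      _ = LinearMap.trace R M (P * (L * P)) := LinearMap.trace_mul_comm R _ _
      _ = LinearMap.trace R M (L * (Q * P)) := by rw [← mul_assoc, hPL, mul_assoc]

section Linear

variable (k : Type*) [Field k] [Preadditive C] [CategoryTheory.Linear k C]

omit [RightRigidCategory C] in
lemma rightComp_mul_rightComp {X : C} (g h : X ⟶ X) :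
    Linear.rightComp k (𝟙_ C) g * Linear.rightComp k (𝟙_ C) h =
      Linear.rightComp k (𝟙_ C) (h ≫ g) :=
  LinearMap.ext fun f => by simp

variable [MonoidalPreadditive C] [MonoidalLinear k C]

lemma nu_succ_one (jj : ∀ X : C, X ≅ (Xᘁ)ᘁ) (V : C) (n : ℕ) :
    nu k jj V (n + 1) 1 = LinearMap.trace k _ (ENlin k jj V n) := by
  rw [nu, pow_one]
  rfl

variable [∀ X Y : C, FiniteDimensional k (X ⟶ Y)]

lemma trace_ENlin_mul_prefixPow (jj : ∀ X : C, X ≅ (Xᘁ)ᘁ) {Z : C} {e : Z ⟶ Z}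
    (he : e ≫ e = e) (n : ℕ) : ∀ j ≤ n,
      LinearMap.trace k _ (ENlin k jj Z n * Linear.rightComp k (𝟙_ C) (prefixPow e (n + 1) 1)) =
        LinearMap.trace k _
          (ENlin k jj Z n * Linear.rightComp k (𝟙_ C) (prefixPow e (n + 1) (j + 1)))
  | 0, _ => rfl
  | j + 1, hjn => by
      rw [trace_ENlin_mul_prefixPow jj he n j (Nat.le_of_succ_le hjn),
        trace_mul_eq_trace_mul_mul_of_isIdempotentElem (M := 𝟙_ C ⟶ pow Z (n + 1))
          (Q := Linear.rightComp k (𝟙_ C) (Z ◁ prefixPow e n (j + 1)))]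
      · erw [rightComp_mul_rightComp, prefixPow_comp_whiskerLeft he]
      · rw [IsIdempotentElem, rightComp_mul_rightComp, prefixPow_comp_of_le he le_rfl]
      · exact LinearMap.ext fun f => (EN_comp_whiskerLeft_prefixPow jj e hjn f).symm

lemma trace_ENlin_mul_retract (jj : ∀ X : C, X ≅ (Xᘁ)ᘁ) {V Z : C} {a : V ⟶ Z} {b : Z ⟶ V}
    (hab : a ≫ b = 𝟙 V) (hnat : a ≫ (jj Z).hom = (jj V).hom ≫ (aᘁ)ᘁ) (n : ℕ) :
    LinearMap.trace k _
        (ENlin k jj Z n * Linear.rightComp k (𝟙_ C) (prefixPow (b ≫ a) (n + 1) 1)) =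
      LinearMap.trace k _ (ENlin k jj V n) := by
  have he : (b ≫ a) ≫ b ≫ a = b ≫ a := by rw [Category.assoc, reassoc_of% hab]
  have hsplit : ENlin k jj Z n * Linear.rightComp k (𝟙_ C) (powMap (b ≫ a) (n + 1)) =
      (ENlin k jj Z n ∘ₗ Linear.rightComp k (𝟙_ C) (powMap a (n + 1))) ∘ₗ
        Linear.rightComp k (𝟙_ C) (powMap b (n + 1)) :=
    LinearMap.ext fun f => by simp [powMap_comp]
  rw [trace_ENlin_mul_prefixPow k jj he n n le_rfl, prefixPow_self, hsplit,
    ← LinearMap.trace_comp_comm']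
  congr 1
  exact LinearMap.ext fun f => EN_comp_powMap jj hab hnat n f

end Linear

/-- Frobenius–Schur indicators are additive:
`ν_n(V ⊕ W) = ν_n(V) + ν_n(W)` (here `Z` together with the given data is a biproduct of
`V` and `W`; stated for `n + 1`, i.e. all `n ≥ 1`). -/
theorem statement19 (k : Type*) [Field k]
    [Abelian C] [CategoryTheory.Linear k C] [MonoidalPreadditive C] [MonoidalLinear k C]
    [∀ X Y : C, FiniteDimensional k (X ⟶ Y)]
    (hC : SemisimpleCat k C) (hIC : IsSimpleObj k (𝟙_ C)) (P : Pivotal C)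
    (V W Z : C) (iV : V ⟶ Z) (iW : W ⟶ Z) (pV : Z ⟶ V) (pW : Z ⟶ W)
    (h1 : iV ≫ pV = 𝟙 V) (h2 : iW ≫ pW = 𝟙 W) (h3 : iV ≫ pW = 0) (h4 : iW ≫ pV = 0)
    (h5 : pV ≫ iV + pW ≫ iW = 𝟙 Z) (n : ℕ) :
    nu k P.j Z (n + 1) 1 = nu k P.j V (n + 1) 1 + nu k P.j W (n + 1) 1 := by
  have hsum :
      prefixPow (pV ≫ iV) (n + 1) 1 + prefixPow (pW ≫ iW) (n + 1) 1 = 𝟙 (pow Z (n + 1)) := by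
    rw [prefixPow_one, prefixPow_one]
    show (pV ≫ iV) ▷ pow Z n + (pW ≫ iW) ▷ pow Z n = 𝟙 (Z ⊗ pow Z n)
    rw [← MonoidalPreadditive.add_whiskerRight, h5, id_whiskerRight]
  have hone : Linear.rightComp k (𝟙_ C) (prefixPow (pV ≫ iV) (n + 1) 1) +
      Linear.rightComp k (𝟙_ C) (prefixPow (pW ≫ iW) (n + 1) 1) = 1 :=
    LinearMap.ext fun f => by simp [← Preadditive.comp_add, hsum]
  rw [nu_succ_one, nu_succ_one, nu_succ_one, ← mul_one (ENlin k P.j Z n), ← hone, mul_add,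
    map_add, trace_ENlin_mul_retract k P.j h1 (P.naturality iV),
    trace_ENlin_mul_retract k P.j h2 (P.naturality iW)]

end FSI
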